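/- arXiv:2305.13946 — 2 statements merged into one kernel-verified Lean document; each statement's English description precedes it below -/
import Mathlib

section
/- For every t ≥ 0, the Newton decrement of the Newton iterates satisfies δ(λ_t)² = ψ'(λ_t)²/ψ''(λ_t) < (2d)⁷/16^t. -/
/-!
Write `x i = λ + η g(i)`, `w i = 1 - η p(i) ∈ [1, 2]`, `S = ∑ w i / x i`, so that `ψ' = 1 - S`, and
let `m = λ + η g(i*) = min x`. Newton's method starts at `m = 1` to the left of the minimiser
(`S ≥ 1`), and then increases `λ` monotonically by `h = (S - 1) / ψ''` without crossing it. After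
the step `ψ'` becomes `-h² ∑ w i / (x i² (x i + h))`, and Cauchy–Schwarz gives
`δ(λ + h)² ≤ δ(λ)² h² / m²`; since `16 h² m² ≤ (m + h)⁴`, the quantity `δ² / m⁴` drops by a factor
`16` per step. Finally `δ(λ₀)² ≤ ∑ w ≤ 2d` by Cauchy–Schwarz, and `S ≥ 1` forces `m ≤ ∑ w ≤ 2d`.
-/

open Finset

namespace LogBarrier

variable {ι : Type*} [Fintype ι] (w c : ι → ℝ)

noncomputable section

/-- `ψ'` and `ψ''` of `ψ(l) = l - ∑ i, w i * log (l + c i)`, with `w i = 1 - η p(i)` and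
`c i = η g(i)`. -/
def barrierDeriv (l : ℝ) : ℝ := 1 - ∑ i, w i / (l + c i)

def barrierDeriv2 (l : ℝ) : ℝ := ∑ i, w i / (l + c i) ^ 2

def newtonStep (l : ℝ) : ℝ := l - barrierDeriv w c l / barrierDeriv2 w c l

def newtonDecrementSq (l : ℝ) : ℝ := barrierDeriv w c l ^ 2 / barrierDeriv2 w c l

end

variable {w c}

lemma barrierDeriv2_nonneg (hw : ∀ i, 0 ≤ w i) (l : ℝ) : 0 ≤ barrierDeriv2 w c l :=
  sum_nonneg fun i _ => div_nonneg (hw i) (sq_nonneg _)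

lemma barrierDeriv2_pos [Nonempty ι] (hw : ∀ i, 0 < w i) {l : ℝ} (hx : ∀ i, 0 < l + c i) :
    0 < barrierDeriv2 w c l :=
  sum_pos (fun i _ => div_pos (hw i) (pow_pos (hx i) 2)) univ_nonempty

lemma newtonDecrementSq_nonneg (hw : ∀ i, 0 ≤ w i) (l : ℝ) : 0 ≤ newtonDecrementSq w c l :=
  div_nonneg (sq_nonneg _) (barrierDeriv2_nonneg hw l)

lemma le_newtonStep (hw : ∀ i, 0 ≤ w i) {l : ℝ} (hS : barrierDeriv w c l ≤ 0) :
    l ≤ newtonStep w c l := by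
  have := div_nonpos_of_nonpos_of_nonneg hS (barrierDeriv2_nonneg (c := c) hw l)
  rw [newtonStep]
  linarith

lemma barrierDeriv_add {l h : ℝ} (hx : ∀ i, l + c i ≠ 0) (hxh : ∀ i, l + h + c i ≠ 0) :
    barrierDeriv w c (l + h) = barrierDeriv w c l + h * barrierDeriv2 w c l -
      h ^ 2 * ∑ i, w i / ((l + c i) ^ 2 * (l + h + c i)) := by
  have term : ∀ i, w i / (l + h + c i) = w i / (l + c i) - h * (w i / (l + c i) ^ 2) +
      h ^ 2 * (w i / ((l + c i) ^ 2 * (l + h + c i))) := fun i => by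
    field_simp [hx i, hxh i]
    ring
  simp only [barrierDeriv, barrierDeriv2, term, sum_add_distrib, sum_sub_distrib, ← mul_sum]
  ring

/-- The Newton step kills the first-order part of `barrierDeriv_add`. -/
lemma barrierDeriv_newtonStep {l : ℝ} (hA : barrierDeriv2 w c l ≠ 0) (hx : ∀ i, l + c i ≠ 0)
    (hx' : ∀ i, newtonStep w c l + c i ≠ 0) :
    barrierDeriv w c (newtonStep w c l) = -((newtonStep w c l - l) ^ 2 *
      ∑ i, w i / ((l + c i) ^ 2 * (newtonStep w c l + c i))) := by
  set h := -(barrierDeriv w c l / barrierDeriv2 w c l)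
  have hstep : newtonStep w c l = l + h := by rw [newtonStep]; ring
  have hhA : h * barrierDeriv2 w c l = -barrierDeriv w c l := by
    rw [neg_mul, div_mul_cancel₀ _ hA]
  rw [hstep] at hx' ⊢
  rw [barrierDeriv_add hx hx', hhA, add_sub_cancel_left]
  ring

lemma barrierDeriv_newtonStep_nonpos (hw : ∀ i, 0 ≤ w i) {l : ℝ} (hA : 0 < barrierDeriv2 w c l)
    (hx : ∀ i, 0 < l + c i) (hS : barrierDeriv w c l ≤ 0) :
    barrierDeriv w c (newtonStep w c l) ≤ 0 := by
  have hx' : ∀ i, 0 < newtonStep w c l + c i := fun i => by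
    linarith [hx i, le_newtonStep hw hS]
  rw [barrierDeriv_newtonStep hA.ne' (fun i => (hx i).ne') (fun i => (hx' i).ne')]
  exact neg_nonpos.mpr (mul_nonneg (sq_nonneg _) (sum_nonneg fun i _ =>
    div_nonneg (hw i) (mul_pos (pow_pos (hx i) 2) (hx' i)).le))

lemma sq_sum_le_sum_mul_sum {w x y : ι → ℝ} (hw : ∀ i, 0 ≤ w i) :
    (∑ i, w i / (x i ^ 2 * y i)) ^ 2 ≤ (∑ i, w i / x i ^ 4) * ∑ i, w i / y i ^ 2 :=
  sum_sq_le_sum_mul_sum_of_sq_le_mul _ (fun i _ => div_nonneg (hw i) (by positivity))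
    (fun i _ => div_nonneg (hw i) (sq_nonneg _)) fun i _ => by
      rw [div_pow, mul_pow, ← pow_mul, div_mul_div_comm, ← sq]
      exact (by ring : w i ^ 2 / (x i ^ (2 * 2) * y i ^ 2) = _).le

lemma newtonDecrementSq_newtonStep_le (hw : ∀ i, 0 ≤ w i) {l m : ℝ}
    (hA : 0 < barrierDeriv2 w c l) (hm : 0 < m) (hxm : ∀ i, m ≤ l + c i)
    (hS : barrierDeriv w c l ≤ 0) :
    newtonDecrementSq w c (newtonStep w c l) ≤
      newtonDecrementSq w c l * ((newtonStep w c l - l) / m) ^ 2 := by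
  set l' := newtonStep w c l
  set h := l' - l
  have hh : 0 ≤ h := sub_nonneg.mpr (le_newtonStep hw hS)
  have hx : ∀ i, 0 < l + c i := fun i => hm.trans_le (hxm i)
  have hx' : ∀ i, 0 < l' + c i := fun i => by linarith [hx i]
  have hhA : barrierDeriv w c l = -(h * barrierDeriv2 w c l) := by
    simp only [h, l', newtonStep, sub_sub_cancel_left, neg_mul, neg_neg, div_mul_cancel₀ _ hA.ne']
  have hD : ∑ i, w i / (l + c i) ^ 4 ≤ barrierDeriv2 w c l / m ^ 2 := by
    rw [barrierDeriv2, sum_div]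
    refine sum_le_sum fun i _ => ?_
    rw [div_div]
    refine div_le_div_of_nonneg_left (hw i) (mul_pos (pow_pos (hx i) 2) (pow_pos hm 2)) ?_
    calc (l + c i) ^ 2 * m ^ 2 ≤ (l + c i) ^ 2 * (l + c i) ^ 2 := by gcongr; exact hxm i
      _ = (l + c i) ^ 4 := by ring
  have hCS := sq_sum_le_sum_mul_sum (x := fun i => l + c i) (y := fun i => l' + c i) hw
  rw [newtonDecrementSq, barrierDeriv_newtonStep hA.ne' (fun i => (hx i).ne')
    (fun i => (hx' i).ne')]
  refine div_le_of_le_mul₀ (barrierDeriv2_nonneg hw _)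
    (mul_nonneg (newtonDecrementSq_nonneg hw l) (sq_nonneg _)) ?_
  calc (-(h ^ 2 * ∑ i, w i / ((l + c i) ^ 2 * (l' + c i)))) ^ 2
      = h ^ 4 * (∑ i, w i / ((l + c i) ^ 2 * (l' + c i))) ^ 2 := by ring
    _ ≤ h ^ 4 * ((barrierDeriv2 w c l / m ^ 2) * barrierDeriv2 w c l') := by
      gcongr
      exact hCS.trans (mul_le_mul_of_nonneg_right hD (barrierDeriv2_nonneg hw _))
    _ = newtonDecrementSq w c l * (h / m) ^ 2 * barrierDeriv2 w c l' := by
      rw [newtonDecrementSq, hhA]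
      field_simp [hA.ne']

lemma newtonDecrementSq_newtonStep_div_le (hw : ∀ i, 0 ≤ w i) {l : ℝ} {i₀ : ι}
    (hc : ∀ i, c i₀ ≤ c i) (hA : 0 < barrierDeriv2 w c l) (hm : 0 < l + c i₀)
    (hS : barrierDeriv w c l ≤ 0) :
    16 * (newtonDecrementSq w c (newtonStep w c l) / (newtonStep w c l + c i₀) ^ 4) ≤
      newtonDecrementSq w c l / (l + c i₀) ^ 4 := by
  set m := l + c i₀
  set h := newtonStep w c l - l
  have hh : 0 ≤ h := sub_nonneg.mpr (le_newtonStep hw hS)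
  have hm' : newtonStep w c l + c i₀ = m + h := by ring
  have hδ := newtonDecrementSq_nonneg (c := c) hw l
  have amgm : 16 * h ^ 2 * m ^ 2 ≤ (m + h) ^ 4 := by
    have := pow_le_pow_left₀ (by positivity) (four_mul_le_sq_add m h) 2
    linarith
  rw [hm']
  calc 16 * (newtonDecrementSq w c (newtonStep w c l) / (m + h) ^ 4)
      ≤ 16 * (newtonDecrementSq w c l * (h / m) ^ 2 / (m + h) ^ 4) := by
        gcongr
        exact newtonDecrementSq_newtonStep_le hw hA hm
          (fun i => by linarith [hc i]) hS
    _ = newtonDecrementSq w c l / m ^ 4 * (16 * h ^ 2 * m ^ 2 / (m + h) ^ 4) := by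
        field_simp
    _ ≤ newtonDecrementSq w c l / m ^ 4 := by
        refine mul_le_of_le_one_right (by positivity) ((div_le_one (by positivity)).mpr amgm)

lemma barrierDeriv_nonpos_of_le (hw : ∀ i, 0 ≤ w i) {l : ℝ} (hx : ∀ i, 0 < l + c i) (j : ι)
    (hj : l + c j ≤ w j) : barrierDeriv w c l ≤ 0 := by
  have hterm : 1 ≤ w j / (l + c j) := (one_le_div (hx j)).mpr hj
  have := single_le_sum (fun i _ => div_nonneg (hw i) (hx i).le) (mem_univ j)
    (f := fun i => w i / (l + c i))
  rw [barrierDeriv]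
  linarith

lemma newtonDecrementSq_le_sum (hw : ∀ i, 0 ≤ w i) {l : ℝ} (hS : barrierDeriv w c l ≤ 0) :
    newtonDecrementSq w c l ≤ ∑ i, w i := by
  have hS1 : 1 ≤ ∑ i, w i / (l + c i) := by rw [barrierDeriv] at hS; linarith
  have hCS : (∑ i, w i / (l + c i)) ^ 2 ≤ (∑ i, w i) * barrierDeriv2 w c l :=
    sum_sq_le_sum_mul_sum_of_sq_le_mul _ (fun i _ => hw i)
      (fun i _ => div_nonneg (hw i) (sq_nonneg _)) fun i _ => by rw [div_pow, mul_div_assoc', ← sq]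
  refine div_le_of_le_mul₀ (barrierDeriv2_nonneg hw l) (sum_nonneg fun i _ => hw i) ?_
  rw [barrierDeriv]
  nlinarith

lemma le_sum_of_barrierDeriv_nonpos (hw : ∀ i, 0 ≤ w i) {l m : ℝ} (hm : 0 < m)
    (hxm : ∀ i, m ≤ l + c i) (hS : barrierDeriv w c l ≤ 0) : m ≤ ∑ i, w i := by
  have hS1 : 1 ≤ ∑ i, w i / (l + c i) := by rw [barrierDeriv] at hS; linarith
  have hle : ∑ i, w i / (l + c i) ≤ (∑ i, w i) / m := by
    rw [sum_div]
    exact sum_le_sum fun i _ => div_le_div_of_nonneg_left (hw i) hm (hxm i)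
  rw [le_div_iff₀ hm] at hle
  nlinarith

section Iterates

variable [Nonempty ι] {i₀ : ι} {l : ℕ → ℝ}

lemma barrierDeriv_iterate_nonpos_and_le (hw : ∀ i, 0 < w i) (hx₀ : ∀ i, 0 < l 0 + c i)
    (hl : ∀ t, l (t + 1) = newtonStep w c (l t)) (hS : barrierDeriv w c (l 0) ≤ 0) (t : ℕ) :
    barrierDeriv w c (l t) ≤ 0 ∧ l 0 ≤ l t := by
  induction t with
  | zero => exact ⟨hS, le_rfl⟩
  | succ t ih =>
    obtain ⟨hSt, hle⟩ := ih
    have hx : ∀ i, 0 < l t + c i := fun i => by linarith [hx₀ i]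
    have hA := barrierDeriv2_pos hw hx
    rw [hl t]
    exact ⟨barrierDeriv_newtonStep_nonpos (fun i => (hw i).le) hA hx hSt,
      hle.trans (le_newtonStep (fun i => (hw i).le) hSt)⟩

theorem newtonDecrementSq_iterate_div_le (hw : ∀ i, 0 < w i) (hc : ∀ i, c i₀ ≤ c i)
    (hl : ∀ t, l (t + 1) = newtonStep w c (l t)) (hm : 0 < l 0 + c i₀)
    (hS : barrierDeriv w c (l 0) ≤ 0) (t : ℕ) :
    newtonDecrementSq w c (l t) / (l t + c i₀) ^ 4 ≤
      newtonDecrementSq w c (l 0) / (l 0 + c i₀) ^ 4 / 16 ^ t := by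
  have hx₀ : ∀ i, 0 < l 0 + c i := fun i => by linarith [hc i]
  induction t with
  | zero => simp
  | succ t ih =>
    obtain ⟨hSt, hle⟩ := barrierDeriv_iterate_nonpos_and_le hw hx₀ hl hS t
    have hx : ∀ i, 0 < l t + c i := fun i => by linarith [hx₀ i]
    have step := newtonDecrementSq_newtonStep_div_le (fun i => (hw i).le) hc
      (barrierDeriv2_pos hw hx) (hx i₀) hSt
    rw [hl t, pow_succ (16 : ℝ), ← div_div, le_div_iff₀ (by norm_num)]
    linarith [step.trans ih]

theorem newtonDecrementSq_iterate_le_sum_pow (hw : ∀ i, 0 < w i) (hc : ∀ i, c i₀ ≤ c i)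
    (hl : ∀ t, l (t + 1) = newtonStep w c (l t)) (hm : 0 < l 0 + c i₀)
    (hS : barrierDeriv w c (l 0) ≤ 0) (t : ℕ) :
    newtonDecrementSq w c (l t) ≤ (∑ i, w i) ^ 5 / (l 0 + c i₀) ^ 4 / 16 ^ t := by
  have hw' : ∀ i, 0 ≤ w i := fun i => (hw i).le
  obtain ⟨hSt, hle⟩ :=
    barrierDeriv_iterate_nonpos_and_le hw (fun i => by linarith [hc i]) hl hS t
  have hmt : 0 < l t + c i₀ := by linarith
  have hmW := le_sum_of_barrierDeriv_nonpos hw' hmt (fun i => by linarith [hc i]) hSt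
  have h₀ := newtonDecrementSq_le_sum hw' hS
  have hW : 0 ≤ ∑ i, w i := sum_nonneg fun i _ => hw' i
  have hdec := newtonDecrementSq_iterate_div_le hw hc hl hm hS t
  rw [div_le_iff₀ (by positivity)] at hdec
  calc _ ≤ _ := hdec
    _ ≤ (∑ i, w i) / (l 0 + c i₀) ^ 4 / 16 ^ t * (∑ i, w i) ^ 4 := by gcongr
    _ = _ := by ring

end Iterates

end LogBarrier

open LogBarrier in
theorem stmt_11_general (d : ℕ) (η : ℝ) (hη : 0 < η) (g p : Fin d → ℝ)
    (hp : ∀ i, -1 ≤ η * p i ∧ η * p i ≤ 0)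
    (istar : Fin d) (histar : ∀ i, g istar ≤ g i)
    (lam : ℕ → ℝ) (hlam0 : lam 0 = 1 - η * g istar)
    (hrec : ∀ t : ℕ, lam (t + 1) = lam t -
      (1 - ∑ i, (1 - η * p i) / (lam t + η * g i)) /
        (∑ i, (1 - η * p i) / (lam t + η * g i) ^ 2)) :
    ∀ t : ℕ,
      (1 - ∑ i, (1 - η * p i) / (lam t + η * g i)) ^ 2 /
          (∑ i, (1 - η * p i) / (lam t + η * g i) ^ 2) <
        (2 * (d : ℝ)) ^ 7 / 16 ^ t := by
  have : Nonempty (Fin d) := ⟨istar⟩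
  have hw : ∀ i, 1 ≤ 1 - η * p i := fun i => by linarith [(hp i).2]
  have hw₀ : ∀ i, 0 < 1 - η * p i := fun i => one_pos.trans_le (hw i)
  have hW : ∑ i, (1 - η * p i) ≤ 2 * d := by
    calc ∑ i, (1 - η * p i) ≤ ∑ _i : Fin d, (2 : ℝ) := sum_le_sum fun i _ => by linarith [(hp i).1]
      _ = 2 * d := by simp [mul_comm]
  have hd : (1 : ℝ) ≤ d := by exact_mod_cast istar.pos
  have hc : ∀ i, η * g istar ≤ η * g i := fun i => mul_le_mul_of_nonneg_left (histar i) hη.le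
  have hm₀ : lam 0 + η * g istar = 1 := by rw [hlam0]; ring
  have hS₀ : barrierDeriv (fun i => 1 - η * p i) (fun i => η * g i) (lam 0) ≤ 0 :=
    barrierDeriv_nonpos_of_le (fun i => (hw₀ i).le) (fun i => by linarith [hc i]) istar
      (hm₀ ▸ hw istar)
  intro t
  have hδ := newtonDecrementSq_iterate_le_sum_pow hw₀ hc hrec (hm₀ ▸ one_pos) hS₀ t
  rw [hm₀, one_pow, div_one] at hδ
  show newtonDecrementSq (fun i => 1 - η * p i) (fun i => η * g i) (lam t) < _
  calc _ ≤ _ := hδ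
    _ ≤ (2 * d) ^ 5 / 16 ^ t := by gcongr; exact sum_nonneg fun i _ => (hw₀ i).le
    _ < (2 * d) ^ 7 / 16 ^ t := by gcongr <;> linarith

/-- For every t ≥ 0, the Newton decrement of the Newton iterates satisfies
δ(λ_t)² = ψ'(λ_t)²/ψ''(λ_t) < (2d)⁷/16^t. -/
theorem stmt_11 (d : ℕ) (hd : 0 < d) (η : ℝ) (hη : 0 < η) (g p : Fin d → ℝ)
    (hp : ∀ i, -1 ≤ η * p i ∧ η * p i ≤ 0)
    (istar : Fin d) (histar : ∀ i, g istar ≤ g i)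
    (lam : ℕ → ℝ) (hlam0 : lam 0 = 1 - η * g istar)
    (hrec : ∀ t : ℕ, lam (t + 1) = lam t -
      (1 - ∑ i, (1 - η * p i) / (lam t + η * g i)) /
        (∑ i, (1 - η * p i) / (lam t + η * g i) ^ 2)) :
    ∀ t : ℕ,
      (1 - ∑ i, (1 - η * p i) / (lam t + η * g i)) ^ 2 /
          (∑ i, (1 - η * p i) / (lam t + η * g i) ^ 2) <
        (2 * (d : ℝ)) ^ 7 / 16 ^ t :=
  stmt_11_general d η hη g p hp istar histar lam hlam0 hrec
end

section
/- Let T = ⌈(9 + 7·log₂ d)/4⌉. Then the Newton iterate λ_{T+1} lies in the region of quadratic convergence {λ ∈ D : δ(λ) < 1/2}; that is, |ψ'(λ_{T+1})|/√(ψ''(λ_{T+1})) < 1/2. In particular, Newton's method started from λ₀ = 1 − η g(i*) reaches this region after O(log d) iterations. -/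
/-!
With weights `w i = 1 - η p i ∈ [1, 2]` and shifts `c i = η g i`, `psi'` and `psi''` are `ψ'` and
`ψ''`. Let `s ≥ 0` be the Newton step at a point with `ψ' ≤ 0`, and `m > 0` a lower bound for all
`λ + c i`. Expanding `1 / (y + s)` to second order gives `ψ'(λ + s) = -s² R` with
`R = ∑ w i / ((λ + c i)² (λ + s + c i)) ≥ 0`, so the iterates increase and stay in `{ψ' ≤ 0}`.
Cauchy–Schwarz bounds `R` by `√ψ''(λ) √ψ''(λ + s) / m`, whence
`δ(λ + s) ≤ (s / m) δ(λ) ≤ (m + s)² / (4 m²) δ(λ)`. As `m` may be moved along with `λ`, the quantity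
`4ᵗ δ(λₜ) / mₜ²` is nonincreasing. Starting from `m₀ = 1` (the minimality of `g i*`), the bounds
`mₜ ≤ ∑ w ≤ 2d` and `δ(λ₀) ≤ √(∑ w)` give `δ(λₜ) ≤ (2d)^(5/2) / 4ᵗ`, which is below `1/2` at `t = T + 1`.
-/

open Finset Real

variable {ι : Type*} [Fintype ι]

noncomputable section

def psi' (w c : ι → ℝ) (x : ℝ) : ℝ := 1 - ∑ i, w i / (x + c i)

def psi'' (w c : ι → ℝ) (x : ℝ) : ℝ := ∑ i, w i / (x + c i) ^ 2

def psi'Remainder (w c : ι → ℝ) (x s : ℝ) : ℝ := ∑ i, w i / ((x + c i) ^ 2 * (x + s + c i))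

def newtonStep (w c : ι → ℝ) (x : ℝ) : ℝ := x - psi' w c x / psi'' w c x

def newtonDecrement (w c : ι → ℝ) (x : ℝ) : ℝ := |psi' w c x| / √(psi'' w c x)

end

section

variable {w c : ι → ℝ} {x m s : ℝ}

lemma psi'_le_one_sub (hw : ∀ i, 0 ≤ w i) (hpos : ∀ i, 0 < x + c i) (j : ι) :
    psi' w c x ≤ 1 - w j / (x + c j) := by
  have := single_le_sum (fun i _ => div_nonneg (hw i) (hpos i).le) (mem_univ j)
  unfold psi'
  linarith

lemma psi''_pos (hw : ∀ i, 0 ≤ w i) (hpos : ∀ i, 0 < x + c i) (hψ : psi' w c x ≤ 0) :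
    0 < psi'' w c x := by
  have hsum : ∑ _i : ι, (0 : ℝ) < ∑ i, w i / (x + c i) := by
    rw [sum_const_zero]; unfold psi' at hψ; linarith
  obtain ⟨i, -, hi⟩ := exists_lt_of_sum_lt hsum
  calc 0 < w i / (x + c i) ^ 2 := by rw [sq, ← div_div]; exact div_pos hi (hpos i)
    _ ≤ psi'' w c x :=
        single_le_sum (f := fun j => w j / (x + c j) ^ 2)
          (fun j _ => div_nonneg (hw j) (sq_nonneg _)) (mem_univ i)

lemma psi'_add (hx : ∀ i, x + c i ≠ 0) (hxs : ∀ i, x + s + c i ≠ 0) :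
    psi' w c (x + s) = psi' w c x + s * psi'' w c x - s ^ 2 * psi'Remainder w c x s := by
  have expand : ∀ i, w i / (x + s + c i) = w i / (x + c i) - s * (w i / (x + c i) ^ 2) +
      s ^ 2 * (w i / ((x + c i) ^ 2 * (x + s + c i))) := by
    intro i
    field_simp [hx i, hxs i]
    ring
  simp only [psi', psi'', psi'Remainder, expand, sum_add_distrib, sum_sub_distrib, ← mul_sum]
  ring

lemma psi'Remainder_sq_le (hw : ∀ i, 0 ≤ w i) (hm : 0 < m) (hmc : ∀ i, m ≤ x + c i)
    (hs : 0 ≤ s) : psi'Remainder w c x s ^ 2 ≤ psi'' w c x / m ^ 2 * psi'' w c (x + s) := by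
  have hy : ∀ i, 0 < x + c i := fun i => hm.trans_le (hmc i)
  have hys : ∀ i, 0 < x + s + c i := fun i => by linarith [hy i]
  calc psi'Remainder w c x s ^ 2 ≤ (∑ i, w i / (x + c i) ^ 4) * psi'' w c (x + s) :=
        sum_sq_le_sum_mul_sum_of_sq_le_mul _ (fun i _ => div_nonneg (hw i) (by positivity))
          (fun i _ => div_nonneg (hw i) (by positivity))
          (fun i _ => le_of_eq (by field_simp [(hy i).ne', (hys i).ne']))
    _ ≤ psi'' w c x / m ^ 2 * psi'' w c (x + s) := by
        gcongr
        · exact sum_nonneg fun i _ => div_nonneg (hw i) (sq_nonneg _)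
        · rw [psi'', sum_div]
          refine sum_le_sum fun i _ => ?_
          rw [div_div, (by ring : (x + c i) ^ 4 = (x + c i) ^ 2 * (x + c i) ^ 2)]
          have := hy i
          exact div_le_div_of_nonneg_left (hw i) (by positivity) (by gcongr; exact hmc i)

lemma newtonDecrement_eq (hF : 0 < psi'' w c x) (hψ : psi' w c x ≤ 0) :
    newtonDecrement w c x = (newtonStep w c x - x) * √(psi'' w c x) := by
  have hsqrt : 0 < √(psi'' w c x) := sqrt_pos.2 hF
  rw [newtonDecrement, newtonStep, abs_of_nonpos hψ]
  field_simp
  rw [sq_sqrt hF.le]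
  ring

theorem newtonStep_contraction (hw : ∀ i, 0 ≤ w i) (hm : 0 < m) (hmc : ∀ i, m ≤ x + c i)
    (hψ : psi' w c x ≤ 0) :
    x ≤ newtonStep w c x ∧ psi' w c (newtonStep w c x) ≤ 0 ∧
      newtonDecrement w c (newtonStep w c x) ≤
        (newtonStep w c x - x) / m * newtonDecrement w c x := by
  have hy : ∀ i, 0 < x + c i := fun i => hm.trans_le (hmc i)
  have hF := psi''_pos hw hy hψ
  rw [newtonDecrement_eq hF hψ]
  set s := newtonStep w c x - x with hs_def
  have hstep : newtonStep w c x = x + s := by ring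
  have hs : 0 ≤ s := by
    rw [hs_def, newtonStep, sub_sub_cancel_left, neg_nonneg]
    exact div_nonpos_of_nonpos_of_nonneg hψ hF.le
  have hsF : psi' w c x + s * psi'' w c x = 0 := by
    rw [hs_def, newtonStep]; field_simp; ring
  have hys : ∀ i, 0 < x + s + c i := fun i => by linarith [hy i]
  have hR : 0 ≤ psi'Remainder w c x s :=
    sum_nonneg fun i _ => div_nonneg (hw i) (mul_pos (pow_pos (hy i) 2) (hys i)).le
  have hψ' : psi' w c (x + s) = -(s ^ 2 * psi'Remainder w c x s) := by
    rw [psi'_add (fun i => (hy i).ne') (fun i => (hys i).ne')]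
    linear_combination hsF
  have hψ'_nonpos : psi' w c (x + s) ≤ 0 := by rw [hψ']; exact neg_nonpos.2 (by positivity)
  have hF' := psi''_pos hw hys hψ'_nonpos
  have hRle : psi'Remainder w c x s ≤ √(psi'' w c x) / m * √(psi'' w c (x + s)) := by
    refine (pow_le_pow_iff_left₀ hR (by positivity) two_ne_zero).1 ?_
    rw [mul_pow, div_pow, sq_sqrt hF.le, sq_sqrt hF'.le]
    exact psi'Remainder_sq_le hw hm hmc hs
  refine ⟨by linarith, hstep ▸ hψ'_nonpos, ?_⟩
  have hsqrt' : 0 < √(psi'' w c (x + s)) := sqrt_pos.2 hF'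
  calc newtonDecrement w c (newtonStep w c x)
      = s ^ 2 * psi'Remainder w c x s / √(psi'' w c (x + s)) := by
        rw [newtonDecrement, hstep, hψ', abs_neg, abs_of_nonneg (by positivity)]
    _ ≤ s ^ 2 * (√(psi'' w c x) / m * √(psi'' w c (x + s))) / √(psi'' w c (x + s)) := by
        gcongr
    _ = s / m * (s * √(psi'' w c x)) := by field_simp

lemma le_sum_of_psi'_nonpos (hw : ∀ i, 0 ≤ w i) (hm : 0 < m) (hmc : ∀ i, m ≤ x + c i)
    (hψ : psi' w c x ≤ 0) : m ≤ ∑ i, w i := by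
  have hS : ∑ i, w i / (x + c i) ≤ (∑ i, w i) / m := by
    rw [sum_div]
    exact sum_le_sum fun i _ => div_le_div_of_nonneg_left (hw i) hm (hmc i)
  have : 1 ≤ (∑ i, w i) / m := by unfold psi' at hψ; linarith
  simpa using (le_div_iff₀ hm).1 this

lemma newtonDecrement_le_sqrt_sum (hw : ∀ i, 0 ≤ w i) (hpos : ∀ i, 0 < x + c i)
    (hψ : psi' w c x ≤ 0) : newtonDecrement w c x ≤ √(∑ i, w i) := by
  have hF := psi''_pos hw hpos hψ
  have hCS : (∑ i, w i / (x + c i)) ^ 2 ≤ (∑ i, w i) * psi'' w c x :=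
    sum_sq_le_sum_mul_sum_of_sq_le_mul _ (fun i _ => hw i)
      (fun i _ => div_nonneg (hw i) (sq_nonneg _))
      (fun i _ => le_of_eq (by field_simp [(hpos i).ne']))
  have habs : |psi' w c x| ^ 2 ≤ (∑ i, w i) * psi'' w c x := by
    refine le_trans ?_ hCS
    rw [abs_of_nonpos hψ]
    unfold psi' at hψ ⊢
    nlinarith
  rw [newtonDecrement, div_le_iff₀ (sqrt_pos.2 hF), ← sqrt_mul (sum_nonneg fun i _ => hw i)]
  exact (le_sqrt (abs_nonneg _) (mul_nonneg (sum_nonneg fun i _ => hw i) hF.le)).2 habs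

theorem newtonStep_iterate_invariant {lam : ℕ → ℝ} (hw : ∀ i, 0 ≤ w i) (hm : 0 < m)
    (hmc : ∀ i, m ≤ lam 0 + c i) (hψ : psi' w c (lam 0) ≤ 0)
    (hrec : ∀ t, lam (t + 1) = newtonStep w c (lam t)) (t : ℕ) :
    lam 0 ≤ lam t ∧ psi' w c (lam t) ≤ 0 ∧
      4 ^ t * newtonDecrement w c (lam t) / (m + (lam t - lam 0)) ^ 2 ≤
        newtonDecrement w c (lam 0) / m ^ 2 := by
  induction t with
  | zero => simp [hψ]
  | succ t ih =>
    obtain ⟨hmono, hψt, hbound⟩ := ih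
    set M := m + (lam t - lam 0)
    have hM : 0 < M := by linarith
    obtain ⟨hle, hψ', hδ⟩ := newtonStep_contraction hw hM (fun i => by linarith [hmc i]) hψt
    rw [← hrec t] at hle hψ' hδ
    set s := lam (t + 1) - lam t
    have hs : 0 ≤ s := sub_nonneg.2 hle
    have hδt : 0 ≤ newtonDecrement w c (lam t) := by unfold newtonDecrement; positivity
    -- `4 M s ≤ (M + s)²` turns the contraction factor `s / M` into `(M + s)² / (4 M²)`
    have hstep : 4 * newtonDecrement w c (lam (t + 1)) / (M + s) ^ 2 ≤
        newtonDecrement w c (lam t) / M ^ 2 := by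
      rw [div_le_div_iff₀ (by positivity) (by positivity)]
      calc 4 * newtonDecrement w c (lam (t + 1)) * M ^ 2
          ≤ 4 * (s / M * newtonDecrement w c (lam t)) * M ^ 2 := by gcongr
        _ = 4 * M * s * newtonDecrement w c (lam t) := by field_simp
        _ ≤ newtonDecrement w c (lam t) * (M + s) ^ 2 := by nlinarith [sq_nonneg (M - s)]
    refine ⟨by linarith, hψ', ?_⟩
    calc 4 ^ (t + 1) * newtonDecrement w c (lam (t + 1)) / (m + (lam (t + 1) - lam 0)) ^ 2
        = 4 ^ t * (4 * newtonDecrement w c (lam (t + 1)) / (M + s) ^ 2) := by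
          rw [show m + (lam (t + 1) - lam 0) = M + s by ring, pow_succ]; ring
      _ ≤ 4 ^ t * (newtonDecrement w c (lam t) / M ^ 2) := by gcongr
      _ = 4 ^ t * newtonDecrement w c (lam t) / M ^ 2 := by ring
      _ ≤ newtonDecrement w c (lam 0) / m ^ 2 := hbound

theorem newtonDecrement_iterate_le {lam : ℕ → ℝ} (hw : ∀ i, 0 ≤ w i) (hm : 0 < m)
    (hmc : ∀ i, m ≤ lam 0 + c i) (hψ : psi' w c (lam 0) ≤ 0)
    (hrec : ∀ t, lam (t + 1) = newtonStep w c (lam t)) (N : ℕ) :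
    4 ^ N * m ^ 2 * newtonDecrement w c (lam N) ≤ (∑ i, w i) ^ 2 * √(∑ i, w i) := by
  obtain ⟨hmono, hψN, hbound⟩ := newtonStep_iterate_invariant hw hm hmc hψ hrec N
  set M := m + (lam N - lam 0)
  have hM : 0 < M := by linarith
  have hMle : M ≤ ∑ i, w i :=
    le_sum_of_psi'_nonpos hw hM (fun i => by linarith [hmc i]) hψN
  have hδ0 := newtonDecrement_le_sqrt_sum hw (fun i => hm.trans_le (hmc i)) hψ
  rw [div_le_div_iff₀ (by positivity) (by positivity)] at hbound
  calc 4 ^ N * m ^ 2 * newtonDecrement w c (lam N)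
      = 4 ^ N * newtonDecrement w c (lam N) * m ^ 2 := by ring
    _ ≤ newtonDecrement w c (lam 0) * M ^ 2 := hbound
    _ ≤ √(∑ i, w i) * (∑ i, w i) ^ 2 := by gcongr
    _ = (∑ i, w i) ^ 2 * √(∑ i, w i) := by ring

end

lemma two_mul_sq_mul_sqrt_lt {d T : ℕ} (hd : 0 < d) (hT : (9 + 7 * logb 2 d) / 4 ≤ T) :
    (2 * d : ℝ) ^ 2 * √(2 * d) < 4 ^ T := by
  have hd1 : (1 : ℝ) ≤ d := by exact_mod_cast hd
  have hL : 0 ≤ logb 2 d := logb_nonneg one_lt_two hd1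
  have hsqrt : √(2 * d : ℝ) ≤ 2 * d := sqrt_le_self_iff.2 (Or.inr (by linarith))
  calc (2 * d : ℝ) ^ 2 * √(2 * d) ≤ (2 * d) ^ 3 := by
        rw [pow_succ]; exact mul_le_mul_of_nonneg_left hsqrt (by positivity)
    _ = (2 : ℝ) ^ (3 + logb 2 d * 3) := by
        rw [rpow_add two_pos, rpow_mul two_pos.le, rpow_logb two_pos (by norm_num) (by positivity),
          rpow_ofNat, rpow_ofNat]
        ring
    _ < (2 : ℝ) ^ ((2 * T : ℕ) : ℝ) := rpow_lt_rpow_of_exponent_lt one_lt_two (by push_cast; linarith)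
    _ = 4 ^ T := by rw [rpow_natCast, pow_mul]; norm_num

theorem stmt_12_general (d : ℕ) (η : ℝ) (hη : 0 < η) (g p : Fin d → ℝ)
    (hp : ∀ i, -1 ≤ η * p i ∧ η * p i ≤ 0)
    (istar : Fin d) (histar : ∀ i, g istar ≤ g i)
    (lam : ℕ → ℝ) (hlam0 : lam 0 = 1 - η * g istar)
    (hrec : ∀ t : ℕ, lam (t + 1) = lam t -
      (1 - ∑ i, (1 - η * p i) / (lam t + η * g i)) /
        (∑ i, (1 - η * p i) / (lam t + η * g i) ^ 2))
    (T : ℕ) (hT : T = ⌈(9 + 7 * Real.logb 2 d) / 4⌉₊) :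
    (∀ i, 0 < lam (T + 1) + η * g i) ∧
    |1 - ∑ i, (1 - η * p i) / (lam (T + 1) + η * g i)| /
        Real.sqrt (∑ i, (1 - η * p i) / (lam (T + 1) + η * g i) ^ 2) < 1 / 2 := by
  set w : Fin d → ℝ := fun i => 1 - η * p i
  set c : Fin d → ℝ := fun i => η * g i
  show (∀ i, 0 < lam (T + 1) + c i) ∧ newtonDecrement w c (lam (T + 1)) < 1 / 2
  have hw : ∀ i, 0 ≤ w i := fun i => by linarith [(hp i).2]
  have hmc : ∀ i, 1 ≤ lam 0 + c i := fun i => by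
    have := mul_le_mul_of_nonneg_left (histar i) hη.le
    simp only [c, hlam0]; linarith
  have hψ : psi' w c (lam 0) ≤ 0 := by
    refine (psi'_le_one_sub hw (fun i => one_pos.trans_le (hmc i)) istar).trans ?_
    simp only [w, c, hlam0, sub_add_cancel, div_one]
    linarith [(hp istar).2]
  have hwsum : ∑ i, w i ≤ 2 * d := by
    simpa [mul_comm] using sum_le_sum fun i (_ : i ∈ univ) => (by linarith [(hp i).1] : w i ≤ 2)
  have hmono := (newtonStep_iterate_invariant hw one_pos hmc hψ hrec (T + 1)).1
  have hδ := newtonDecrement_iterate_le hw one_pos hmc hψ hrec (T + 1)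
  have hnum := two_mul_sq_mul_sqrt_lt istar.pos (hT ▸ Nat.le_ceil _)
  refine ⟨fun i => by linarith [hmc i], ?_⟩
  have hsum_le : (∑ i, w i) ^ 2 * √(∑ i, w i) ≤ (2 * d) ^ 2 * √(2 * d) := by
    have := sum_nonneg fun i (_ : i ∈ univ) => hw i
    gcongr
  rw [one_pow, mul_one, pow_succ] at hδ
  nlinarith [pow_pos (four_pos (α := ℝ)) T]

/-- Let T = ⌈(9 + 7 log₂ d)/4⌉. Then the Newton iterate λ_{T+1} lies in the
region of quadratic convergence {λ ∈ D : δ(λ) < 1/2}; that is, λ_{T+1} ∈ D and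
|ψ'(λ_{T+1})|/√(ψ''(λ_{T+1})) < 1/2. -/
theorem stmt_12 (d : ℕ) (hd : 0 < d) (η : ℝ) (hη : 0 < η) (g p : Fin d → ℝ)
    (hp : ∀ i, -1 ≤ η * p i ∧ η * p i ≤ 0)
    (istar : Fin d) (histar : ∀ i, g istar ≤ g i)
    (lam : ℕ → ℝ) (hlam0 : lam 0 = 1 - η * g istar)
    (hrec : ∀ t : ℕ, lam (t + 1) = lam t -
      (1 - ∑ i, (1 - η * p i) / (lam t + η * g i)) /
        (∑ i, (1 - η * p i) / (lam t + η * g i) ^ 2))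
    (T : ℕ) (hT : T = ⌈(9 + 7 * Real.logb 2 d) / 4⌉₊) :
    (∀ i, 0 < lam (T + 1) + η * g i) ∧
    |1 - ∑ i, (1 - η * p i) / (lam (T + 1) + η * g i)| /
        Real.sqrt (∑ i, (1 - η * p i) / (lam (T + 1) + η * g i) ^ 2) < 1 / 2 :=
  stmt_12_general d η hη g p hp istar histar lam hlam0 hrec T hT
end
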